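/- arXiv:2107.13582 — 2 statements merged into one kernel-verified Lean document; each statement's English description precedes it below -/
import Mathlib

section
/- Let N ≥ 1 and let u : ℝ^N → ℂ, Φ : ℝ^N → ℝ, and u_h : ℝ^N → ℂ be differentiable at a point x with |u_h(x)| = 1, and set w := u·e^{−iΦ}·conj(u_h) and γᵢ := u_h × ∂ᵢu_h. Then for every index i, w(x) × ∂ᵢw(x) = u(x) × ∂ᵢu(x) − ∂ᵢΦ(x) − γᵢ(x) + (1 − |u(x)|²)·(∂ᵢΦ(x) + γᵢ(x)), where z × w := Re(z)·Im(w) − Im(z)·Re(w) for z, w ∈ ℂ. -/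
/-- The cross product of two complex numbers: `z × w = Re(z)·Im(w) − Im(z)·Re(w)`. -/
def complexCross (z w : ℂ) : ℝ := z.re * w.im - z.im * w.re

/-!
Since `z × w = Im (conj z * w)`, the current `j f := f × ∂f` obeys the Leibniz rule
`j (f g) = |g|² j f + |f|² j g`; conjugation flips its sign and `e^{iθ}` has current `∂θ`.
With `|e^{-iΦ}| = |u_h| = 1` this gives `j w = j u - |u|² (∂Φ + γ)`, which is the claim rearranged.
-/

open Complex ComplexConjugate

theorem complexCross_mul_add_mul (a b a' b' : ℂ) :
    complexCross (a * b) (a' * b + a * b') =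
      ‖b‖ ^ 2 * complexCross a a' + ‖a‖ ^ 2 * complexCross b b' := by
  simp only [complexCross, Complex.sq_norm, normSq_apply, mul_re, mul_im, add_re, add_im]
  ring

theorem complexCross_conj_conj (z w : ℂ) :
    complexCross (conj z) (conj w) = -complexCross z w := by
  simp only [complexCross, conj_re, conj_im]
  ring

theorem complexCross_exp_mul_I (θ t : ℝ) :
    complexCross (exp (θ * I)) (t * I * exp (θ * I)) = t := by
  have h := Complex.sq_norm (exp (θ * I))
  rw [norm_exp_ofReal_mul_I, normSq_apply] at h
  simp only [complexCross, mul_re, mul_im, I_re, I_im, ofReal_re, ofReal_im]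
  linear_combination (-t) * h

section fderiv

variable {E : Type*} [NormedAddCommGroup E] [NormedSpace ℝ E] {x : E}

theorem complexCross_fderiv_mul {f g : E → ℂ} (hf : DifferentiableAt ℝ f x)
    (hg : DifferentiableAt ℝ g x) (v : E) :
    complexCross (f x * g x) (fderiv ℝ (fun y => f y * g y) x v) =
      ‖g x‖ ^ 2 * complexCross (f x) (fderiv ℝ f x v)
        + ‖f x‖ ^ 2 * complexCross (g x) (fderiv ℝ g x v) := by
  rw [fderiv_fun_mul hf hg, ← complexCross_mul_add_mul]
  simp only [add_apply, smul_apply, smul_eq_mul]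
  rw [add_comm, mul_comm (g x)]

theorem complexCross_fderiv_conj {f : E → ℂ} (v : E) :
    complexCross (conj (f x)) (fderiv ℝ (fun y => conj (f y)) x v) =
      -complexCross (f x) (fderiv ℝ f x v) := by
  simp only [← Complex.star_def]
  rw [fderiv_star]
  exact complexCross_conj_conj _ _

theorem complexCross_fderiv_exp_mul_I {θ : E → ℝ} (hθ : DifferentiableAt ℝ θ x) (v : E) :
    complexCross (exp (θ x * I)) (fderiv ℝ (fun y => exp (θ y * I)) x v) = fderiv ℝ θ x v := by
  have h : HasFDerivAt (fun y => (θ y : ℂ) * I) ((fderiv ℝ θ x).smulRight I) x := by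
    simpa [Complex.real_smul] using hθ.hasFDerivAt.smul_const I
  rw [h.cexp.fderiv]
  simp only [smul_apply, ContinuousLinearMap.smulRight_apply, smul_eq_mul, real_smul]
  convert complexCross_exp_mul_I (θ x) (fderiv ℝ θ x v) using 2
  ring

end fderiv

theorem stmt_14_general (N : ℕ)
    (u : EuclideanSpace ℝ (Fin N) → ℂ) (Φ : EuclideanSpace ℝ (Fin N) → ℝ)
    (uh : EuclideanSpace ℝ (Fin N) → ℂ) (x : EuclideanSpace ℝ (Fin N))
    (hu : DifferentiableAt ℝ u x) (hΦ : DifferentiableAt ℝ Φ x)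
    (huh : DifferentiableAt ℝ uh x) (hmod : ‖uh x‖ = 1) (i : Fin N) :
    complexCross
        ((fun z => u z * Complex.exp (-(Φ z : ℂ) * Complex.I) * (starRingEnd ℂ) (uh z)) x)
        (fderiv ℝ (fun z => u z * Complex.exp (-(Φ z : ℂ) * Complex.I) * (starRingEnd ℂ) (uh z))
          x (EuclideanSpace.single i 1))
      = complexCross (u x) (fderiv ℝ u x (EuclideanSpace.single i 1))
          - fderiv ℝ Φ x (EuclideanSpace.single i 1)
          - complexCross (uh x) (fderiv ℝ uh x (EuclideanSpace.single i 1))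
          + (1 - ‖u x‖ ^ 2) * (fderiv ℝ Φ x (EuclideanSpace.single i 1)
              + complexCross (uh x) (fderiv ℝ uh x (EuclideanSpace.single i 1))) := by
  set v : EuclideanSpace ℝ (Fin N) := EuclideanSpace.single i 1
  have hE : DifferentiableAt ℝ (fun z => exp (-(Φ z : ℂ) * I)) x := by fun_prop
  have hjE : complexCross (exp (-(Φ x : ℂ) * I)) (fderiv ℝ (fun z => exp (-(Φ z : ℂ) * I)) x v)
      = -fderiv ℝ Φ x v := by
    simpa [fderiv_neg] using complexCross_fderiv_exp_mul_I hΦ.neg v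
  have hnormE : ‖exp (-(Φ x : ℂ) * I)‖ = 1 := by
    simpa using norm_exp_ofReal_mul_I (-Φ x)
  have huE : DifferentiableAt ℝ (fun z => u z * exp (-(Φ z : ℂ) * I)) x := hu.mul hE
  have hconj : DifferentiableAt ℝ (fun z => conj (uh z)) x := by fun_prop
  rw [complexCross_fderiv_mul huE hconj, complexCross_fderiv_mul hu hE, complexCross_fderiv_conj,
    hjE, norm_mul, hnormE, RCLike.norm_conj, hmod]
  ring

/-- Gauge-transformation identity: with `w := u·e^{−iΦ}·conj(u_h)` and
`γᵢ := u_h × ∂ᵢu_h`, if `u`, `Φ`, `u_h` are differentiable at `x` and `|u_h(x)| = 1`, then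
`w × ∂ᵢw = u × ∂ᵢu − ∂ᵢΦ − γᵢ + (1 − |u|²)(∂ᵢΦ + γᵢ)` at `x`. -/
theorem stmt_14 (N : ℕ) (hN : 1 ≤ N)
    (u : EuclideanSpace ℝ (Fin N) → ℂ) (Φ : EuclideanSpace ℝ (Fin N) → ℝ)
    (uh : EuclideanSpace ℝ (Fin N) → ℂ) (x : EuclideanSpace ℝ (Fin N))
    (hu : DifferentiableAt ℝ u x) (hΦ : DifferentiableAt ℝ Φ x)
    (huh : DifferentiableAt ℝ uh x) (hmod : ‖uh x‖ = 1) (i : Fin N) :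
    complexCross
        ((fun z => u z * Complex.exp (-(Φ z : ℂ) * Complex.I) * (starRingEnd ℂ) (uh z)) x)
        (fderiv ℝ (fun z => u z * Complex.exp (-(Φ z : ℂ) * Complex.I) * (starRingEnd ℂ) (uh z))
          x (EuclideanSpace.single i 1))
      = complexCross (u x) (fderiv ℝ u x (EuclideanSpace.single i 1))
          - fderiv ℝ Φ x (EuclideanSpace.single i 1)
          - complexCross (uh x) (fderiv ℝ uh x (EuclideanSpace.single i 1))
          + (1 - ‖u x‖ ^ 2) * (fderiv ℝ Φ x (EuclideanSpace.single i 1)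
              + complexCross (uh x) (fderiv ℝ uh x (EuclideanSpace.single i 1))) :=
  stmt_14_general N u Φ uh x hu hΦ huh hmod i
end

section
/- Let N ≥ 3 be an integer and let 0 < a, b with 2a ≤ b. Define l : [0,∞) → [0,1] by l(s) = 0 for s ≤ a; l(s) = ((s/a)^{N−1} − 1)/(2^{N−1} − 1) for a ≤ s ≤ 2a; l(s) = 1 for 2a ≤ s ≤ b; l(s) = (2^{N−1} − (s/b)^{N−1})/(2^{N−1} − 1) for b ≤ s ≤ 2b; l(s) = 0 for s ≥ 2b. Define h(u,s) := ((N−1)(N−2)/(2^{N−1}−1))·(1 if 0 ≤ u ≤ s; 2 − u/s if s ≤ u ≤ 2s; 0 if u ≥ 2s). Then for every k ∈ L¹(B_{2b}(0)) on the Euclidean ball B_{2b}(0) ⊂ ℝ^N, ∫_{B_{2b}(0)} l(|y|)·|y|^{2−N}·k(y) dy = ∫_a^b s^{−1}·J_s^k ds + (N−2)^{−1}·(J_b^k − J_a^k), where J_s^k := s^{2−N}·∫_{B_{2s}(0)} k(y)·h(|y|,s) dy. -/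
open MeasureTheory

/-- The radial cutoff `l` supported in `[a, 2b]`, equal to `1` on `[2a, b]`. -/
noncomputable def lProfile (N : ℕ) (a b : ℝ) (s : ℝ) : ℝ :=
  if s ≤ a then 0
  else if s ≤ 2 * a then ((s / a) ^ (N - 1) - 1) / ((2 : ℝ) ^ (N - 1) - 1)
  else if s ≤ b then 1
  else if s ≤ 2 * b then ((2 : ℝ) ^ (N - 1) - (s / b) ^ (N - 1)) / ((2 : ℝ) ^ (N - 1) - 1)
  else 0

/-- The averaging kernel `h(u,s)`. -/
noncomputable def hProfile (N : ℕ) (u s : ℝ) : ℝ :=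
  ((N : ℝ) - 1) * ((N : ℝ) - 2) / ((2 : ℝ) ^ (N - 1) - 1) *
    (if u ≤ s then 1 else if u ≤ 2 * s then 2 - u / s else 0)

/-!
Fix the radius `u = ‖y‖` and write `w(u, s) = s ^ (2 - N) * h(u, s)`. By Fubini the identity
reduces to the radial one
`l(u) u ^ (2 - N) = ∫ s in a..b, s⁻¹ w(u, s) + (N - 2)⁻¹ (w(u, b) - w(u, a))`,
whose right-hand side is additive in the interval `[a, b]`. On scales `s ≥ u` the kernel `h(u, s)`
is constant and the boundary term cancels the integral exactly; on scales `s ≤ u / 2` it vanishes;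
on `[c, d] ⊆ [u / 2, u]`, where `h(u, s)` is affine in `u / s`, the expression equals
`u (c ^ (1 - N) - d ^ (1 - N)) / (2 ^ (N - 1) - 1)`. Cutting `[a, b]` at `u / 2` and `u` and
comparing with the five branches of `l` gives the radial identity.
-/

open Set

section Profiles

variable {N : ℕ} {u s : ℝ}

lemma hProfile_of_le (h : u ≤ s) :
    hProfile N u s = ((N : ℝ) - 1) * ((N : ℝ) - 2) / ((2 : ℝ) ^ (N - 1) - 1) := by
  simp [hProfile, h]

lemma hProfile_of_le_of_le (hs : 0 < s) (hsu : s ≤ u) (hu : u ≤ 2 * s) :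
    hProfile N u s
      = ((N : ℝ) - 1) * ((N : ℝ) - 2) / ((2 : ℝ) ^ (N - 1) - 1) * (2 - u / s) := by
  rcases hsu.eq_or_lt with rfl | hlt
  · simp only [hProfile, le_refl, if_true, div_self hs.ne']
    norm_num
  · simp [hProfile, not_le.2 hlt, hu]

lemma hProfile_of_two_mul_le (hs : 0 < s) (h : 2 * s ≤ u) : hProfile N u s = 0 := by
  rcases h.eq_or_lt with rfl | hlt
  · simp [hProfile, hs.ne', not_le.2 (by linarith : s < 2 * s)]
  · simp [hProfile, not_le.2 hlt, not_le.2 (by linarith : s < u)]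

lemma abs_hProfile_le :
    |hProfile N u s| ≤ |((N : ℝ) - 1) * ((N : ℝ) - 2) / ((2 : ℝ) ^ (N - 1) - 1)| := by
  rw [hProfile, abs_mul]
  refine mul_le_of_le_one_right (abs_nonneg _) ?_
  split_ifs with h₁ h₂
  · simp
  · have hs : 0 < s := by linarith
    have h₁' : 1 < u / s := (one_lt_div hs).2 (not_le.1 h₁)
    have h₂' : u / s ≤ 2 := (div_le_iff₀ hs).2 (by linarith)
    rw [abs_le]; constructor <;> linarith
  · simp

lemma measurable_hProfile : Measurable fun p : ℝ × ℝ => hProfile N p.1 p.2 := by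
  refine Measurable.const_mul (Measurable.ite (measurableSet_le measurable_fst measurable_snd)
    measurable_const (Measurable.ite ?_ (by fun_prop) measurable_const)) _
  exact measurableSet_le measurable_fst (by fun_prop)

end Profiles

lemma rpow_two_sub_eq_mul {x : ℝ} (hx : 0 < x) (n : ℝ) : x ^ (2 - n) = x ^ (1 - n) * x := by
  rw [show 2 - n = (1 - n) + 1 by ring, Real.rpow_add_one hx.ne']

lemma pow_sub_one_eq_inv_rpow {x : ℝ} (hx : 0 < x) {N : ℕ} (hN : 1 ≤ N) :
    x ^ (N - 1) = (x ^ ((1 : ℝ) - N))⁻¹ := by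
  rw [← Real.rpow_natCast, Nat.cast_sub hN, Nat.cast_one, ← Real.rpow_neg hx.le, neg_sub]

lemma integral_rpow_of_pos {r c d : ℝ} (hr : r ≠ -1) (hc : 0 < c) (hcd : c ≤ d) :
    ∫ s in c..d, s ^ r = (d ^ (r + 1) - c ^ (r + 1)) / (r + 1) :=
  integral_rpow (Or.inr ⟨hr, by rw [uIcc_of_le hcd]; exact fun h => h.1.not_gt hc⟩)

lemma two_pow_sub_one_sub_one_ne_zero {N : ℕ} (hN : 2 ≤ N) : (2 : ℝ) ^ (N - 1) - 1 ≠ 0 :=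
  sub_ne_zero.2 (one_lt_pow₀ (by norm_num : (1 : ℝ) < 2) (by omega)).ne'

lemma two_pow_sub_one_mul_rpow_one_sub {N : ℕ} (hN : 1 ≤ N) :
    (2 : ℝ) ^ (N - 1) * 2 ^ ((1 : ℝ) - N) = 1 := by
  rw [pow_sub_one_eq_inv_rpow two_pos hN, inv_mul_cancel₀ (by positivity)]

noncomputable def scaleWeight (N : ℕ) (u s : ℝ) : ℝ := s ^ ((2 : ℝ) - N) * hProfile N u s

noncomputable def scaleAverage (N : ℕ) (u c d : ℝ) : ℝ :=
  (∫ s in c..d, s⁻¹ * scaleWeight N u s) +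
    ((N : ℝ) - 2)⁻¹ * (scaleWeight N u d - scaleWeight N u c)

section ScaleAverage

variable {N : ℕ} {u c d e : ℝ}

lemma measurable_scaleWeight : Measurable fun p : ℝ × ℝ => scaleWeight N p.1 p.2 :=
  (measurable_snd.pow_const _).mul measurable_hProfile

lemma abs_inv_mul_scaleWeight_le (hN : 2 ≤ N) (hc : 0 < c) {s : ℝ} (hcs : c ≤ s) :
    |s⁻¹ * scaleWeight N u s|
      ≤ c⁻¹ * (c ^ ((2 : ℝ) - N) *
          |((N : ℝ) - 1) * ((N : ℝ) - 2) / ((2 : ℝ) ^ (N - 1) - 1)|) := by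
  have hs : 0 < s := hc.trans_le hcs
  have hN' : (2 : ℝ) ≤ N := by exact_mod_cast hN
  rw [scaleWeight, abs_mul, abs_mul, abs_inv, abs_of_pos hs, abs_of_pos (by positivity)]
  exact mul_le_mul (inv_anti₀ hc hcs) (mul_le_mul (Real.rpow_le_rpow_of_nonpos hc hcs
    (by linarith)) abs_hProfile_le (abs_nonneg _) (by positivity)) (by positivity) (by positivity)

lemma intervalIntegrable_inv_mul_scaleWeight (hN : 2 ≤ N) (hc : 0 < c) (hcd : c ≤ d) :
    IntervalIntegrable (fun s => s⁻¹ * scaleWeight N u s) volume c d := by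
  rw [intervalIntegrable_iff_integrableOn_Ioc_of_le hcd]
  refine Measure.integrableOn_of_bounded (M := c⁻¹ * (c ^ ((2 : ℝ) - N) *
    |((N : ℝ) - 1) * ((N : ℝ) - 2) / ((2 : ℝ) ^ (N - 1) - 1)|)) measure_Ioc_lt_top.ne ?_ ?_
  · exact (measurable_inv.mul (measurable_scaleWeight.comp
      (measurable_const.prodMk measurable_id))).aestronglyMeasurable
  · filter_upwards [ae_restrict_mem measurableSet_Ioc] with s hs
    exact abs_inv_mul_scaleWeight_le hN hc hs.1.le

lemma scaleAverage_add (hN : 2 ≤ N) (hc : 0 < c) (hcd : c ≤ d) (hde : d ≤ e) :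
    scaleAverage N u c d + scaleAverage N u d e = scaleAverage N u c e := by
  simp only [scaleAverage]
  rw [← intervalIntegral.integral_add_adjacent_intervals
    (intervalIntegrable_inv_mul_scaleWeight hN hc hcd)
    (intervalIntegrable_inv_mul_scaleWeight hN (hc.trans_le hcd) hde)]
  ring

lemma scaleAverage_eq_zero_of_le (hN : 3 ≤ N) (hc : 0 < c) (hcd : c ≤ d) (huc : u ≤ c) :
    scaleAverage N u c d = 0 := by
  have hN' : (3 : ℝ) ≤ N := by exact_mod_cast hN
  have hcongr : EqOn (fun s => s⁻¹ * scaleWeight N u s)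
      (fun s => ((N : ℝ) - 1) * ((N : ℝ) - 2) / ((2 : ℝ) ^ (N - 1) - 1) * s ^ ((1 : ℝ) - N))
      (uIcc c d) := by
    intro s hs
    rw [uIcc_of_le hcd] at hs
    have hs0 : 0 < s := hc.trans_le hs.1
    simp only [scaleWeight, hProfile_of_le (huc.trans hs.1), rpow_two_sub_eq_mul hs0]
    field_simp
  rw [scaleAverage, intervalIntegral.integral_congr hcongr, intervalIntegral.integral_const_mul,
    integral_rpow_of_pos (by linarith : (1 : ℝ) - N ≠ -1) hc hcd,
    show (1 : ℝ) - N + 1 = 2 - N by ring]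
  simp only [scaleWeight, hProfile_of_le huc, hProfile_of_le (huc.trans hcd)]
  field_simp [(by linarith : (2 : ℝ) - N ≠ 0), (by linarith : (N : ℝ) - 2 ≠ 0)]
  ring

lemma scaleAverage_eq_zero_of_two_mul_le (hc : 0 < c) (hcd : c ≤ d) (hdu : 2 * d ≤ u) :
    scaleAverage N u c d = 0 := by
  have hcongr : EqOn (fun s => s⁻¹ * scaleWeight N u s) 0 (uIcc c d) := by
    intro s hs
    rw [uIcc_of_le hcd] at hs
    simp [scaleWeight, hProfile_of_two_mul_le (hc.trans_le hs.1) (by linarith [hs.2])]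
  rw [scaleAverage, intervalIntegral.integral_congr hcongr]
  simp [scaleWeight,
    hProfile_of_two_mul_le hc (by linarith : 2 * c ≤ u),
    hProfile_of_two_mul_le (hc.trans_le hcd) hdu]

lemma scaleAverage_eq_of_le_of_le (hN : 3 ≤ N) (hc : 0 < c) (hcd : c ≤ d) (hdu : d ≤ u)
    (huc : u ≤ 2 * c) :
    scaleAverage N u c d
      = u * (c ^ ((1 : ℝ) - N) - d ^ ((1 : ℝ) - N)) / ((2 : ℝ) ^ (N - 1) - 1) := by
  have hN' : (3 : ℝ) ≤ N := by exact_mod_cast hN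
  have hd : 0 < d := hc.trans_le hcd
  have hQ := two_pow_sub_one_sub_one_ne_zero (N := N) (by omega)
  have hcongr : EqOn (fun s => s⁻¹ * scaleWeight N u s)
      (fun s => ((N : ℝ) - 1) * ((N : ℝ) - 2) / ((2 : ℝ) ^ (N - 1) - 1) *
        (2 * s ^ ((1 : ℝ) - N) - u * s ^ (-(N : ℝ)))) (uIcc c d) := by
    intro s hs
    rw [uIcc_of_le hcd] at hs
    have hs0 : 0 < s := hc.trans_le hs.1
    simp only [scaleWeight, hProfile_of_le_of_le hs0 (hs.2.trans hdu) (by linarith [hs.1]),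
      rpow_two_sub_eq_mul hs0, show -(N : ℝ) = (1 - N) - 1 by ring, Real.rpow_sub_one hs0.ne']
    field_simp
  have hint (r : ℝ) : IntervalIntegrable (fun s : ℝ => s ^ r) volume c d :=
    intervalIntegral.intervalIntegrable_rpow
      (Or.inr (by rw [uIcc_of_le hcd]; exact fun h => h.1.not_gt hc))
  rw [scaleAverage, intervalIntegral.integral_congr hcongr, intervalIntegral.integral_const_mul,
    intervalIntegral.integral_sub ((hint _).const_mul 2) ((hint _).const_mul u),
    intervalIntegral.integral_const_mul, intervalIntegral.integral_const_mul,
    integral_rpow_of_pos (by linarith : (1 : ℝ) - N ≠ -1) hc hcd,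
    integral_rpow_of_pos (by linarith : -(N : ℝ) ≠ -1) hc hcd,
    show (1 : ℝ) - N + 1 = 2 - N by ring, show -(N : ℝ) + 1 = 1 - N by ring]
  simp only [scaleWeight, hProfile_of_le_of_le hd hdu (by linarith),
    hProfile_of_le_of_le hc (hcd.trans hdu) huc, rpow_two_sub_eq_mul hc,
    rpow_two_sub_eq_mul hd]
  field_simp [(by linarith : (2 : ℝ) - N ≠ 0), (by linarith : (N : ℝ) - 2 ≠ 0),
    (by linarith : (1 : ℝ) - N ≠ 0)]
  ring

end ScaleAverage

section RadialIdentity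

variable {N : ℕ} {a b u : ℝ}

lemma lProfile_mul_rpow_eq_scaleAverage_of_inner_edge (hN : 3 ≤ N) (ha : 0 < a)
    (hab : 2 * a ≤ b) (h₁ : a < u) (h₂ : u ≤ 2 * a) :
    lProfile N a b u * u ^ ((2 : ℝ) - N) = scaleAverage N u a b := by
  have hu : 0 < u := ha.trans h₁
  have hQ := two_pow_sub_one_sub_one_ne_zero (N := N) (by omega)
  rw [← scaleAverage_add (by omega) ha h₁.le (by linarith : u ≤ b),
    scaleAverage_eq_of_le_of_le hN ha h₁.le le_rfl h₂,
    scaleAverage_eq_zero_of_le hN hu (by linarith) le_rfl]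
  simp only [lProfile, if_neg (not_le.2 h₁), if_pos h₂]
  rw [pow_sub_one_eq_inv_rpow (div_pos hu ha) (by omega), Real.div_rpow hu.le ha.le,
    rpow_two_sub_eq_mul hu]
  field_simp
  ring

lemma lProfile_mul_rpow_eq_scaleAverage_of_plateau (hN : 3 ≤ N) (ha : 0 < a)
    (h₂ : 2 * a < u) (h₃ : u ≤ b) :
    lProfile N a b u * u ^ ((2 : ℝ) - N) = scaleAverage N u a b := by
  have hu : 0 < u := by linarith
  have hQ := two_pow_sub_one_sub_one_ne_zero (N := N) (by omega)
  rw [← scaleAverage_add (by omega) ha (by linarith : a ≤ u / 2) (by linarith : u / 2 ≤ b),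
    ← scaleAverage_add (by omega) (by linarith) (by linarith : u / 2 ≤ u) h₃,
    scaleAverage_eq_zero_of_two_mul_le ha (by linarith) (by linarith),
    scaleAverage_eq_of_le_of_le hN (by linarith) (by linarith) le_rfl (by linarith),
    scaleAverage_eq_zero_of_le hN hu h₃ le_rfl]
  simp only [lProfile, if_neg (by linarith : ¬u ≤ a), if_neg (not_le.2 h₂), if_pos h₃]
  rw [Real.div_rpow hu.le two_pos.le, rpow_two_sub_eq_mul hu]
  field_simp
  linear_combination
    (u ^ ((1 : ℝ) - N) * u) * two_pow_sub_one_mul_rpow_one_sub (N := N) (by omega)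

lemma lProfile_mul_rpow_eq_scaleAverage_of_outer_edge (hN : 3 ≤ N) (ha : 0 < a)
    (hab : 2 * a ≤ b) (h₃ : b < u) (h₄ : u ≤ 2 * b) :
    lProfile N a b u * u ^ ((2 : ℝ) - N) = scaleAverage N u a b := by
  have hb : 0 < b := by linarith
  have hu : 0 < u := by linarith
  have hQ := two_pow_sub_one_sub_one_ne_zero (N := N) (by omega)
  rw [← scaleAverage_add (by omega) ha (by linarith : a ≤ u / 2) (by linarith : u / 2 ≤ b),
    scaleAverage_eq_zero_of_two_mul_le ha (by linarith) (by linarith),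
    scaleAverage_eq_of_le_of_le hN (by linarith) (by linarith) h₃.le (by linarith)]
  simp only [lProfile, if_neg (by linarith : ¬u ≤ a), if_neg (by linarith : ¬u ≤ 2 * a),
    if_neg (not_le.2 h₃), if_pos h₄]
  rw [pow_sub_one_eq_inv_rpow (div_pos hu hb) (by omega), Real.div_rpow hu.le hb.le,
    Real.div_rpow hu.le two_pos.le, rpow_two_sub_eq_mul hu]
  field_simp
  linear_combination
    (u ^ ((1 : ℝ) - N) * u) * two_pow_sub_one_mul_rpow_one_sub (N := N) (by omega)

lemma lProfile_mul_rpow_eq_scaleAverage (hN : 3 ≤ N) (ha : 0 < a) (hab : 2 * a ≤ b) (u : ℝ) :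
    lProfile N a b u * u ^ ((2 : ℝ) - N) = scaleAverage N u a b := by
  rcases le_or_gt u a with h₁ | h₁
  · simp [lProfile, h₁, scaleAverage_eq_zero_of_le hN ha (by linarith : a ≤ b) h₁]
  rcases le_or_gt u (2 * a) with h₂ | h₂
  · exact lProfile_mul_rpow_eq_scaleAverage_of_inner_edge hN ha hab h₁ h₂
  rcases le_or_gt u b with h₃ | h₃
  · exact lProfile_mul_rpow_eq_scaleAverage_of_plateau hN ha h₂ h₃
  rcases le_or_gt u (2 * b) with h₄ | h₄
  · exact lProfile_mul_rpow_eq_scaleAverage_of_outer_edge hN ha hab h₃ h₄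
  · simp [lProfile, not_le.2 h₁, not_le.2 h₂, not_le.2 h₃, not_le.2 h₄,
      scaleAverage_eq_zero_of_two_mul_le ha (by linarith : a ≤ b) h₄.le]

end RadialIdentity

section Fubini

variable {X : Type*} [MeasurableSpace X] {μ : Measure X} {k : X → ℝ} {f : ℝ → X → ℝ}
  {a b M : ℝ}

lemma integrable_intervalIntegral_mul (hk : Integrable k μ) (hf : Measurable (Function.uncurry f))
    (hM : ∀ s ∈ uIoc a b, ∀ y, ‖f s y‖ ≤ M) :
    Integrable (fun y => (∫ s in a..b, f s y) * k y) μ := by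
  refine hk.bdd_mul ?_ (Filter.Eventually.of_forall fun y =>
    intervalIntegral.norm_integral_le_of_norm_le_const fun s hs => hM s hs y)
  exact (hf.stronglyMeasurable.integral_prod_left'.sub
    hf.stronglyMeasurable.integral_prod_left').aestronglyMeasurable

lemma integral_intervalIntegral_mul [SFinite μ] (hk : Integrable k μ)
    (hf : Measurable (Function.uncurry f)) (hM : ∀ s ∈ uIoc a b, ∀ y, ‖f s y‖ ≤ M) :
    ∫ y, (∫ s in a..b, f s y) * k y ∂μ = ∫ s in a..b, ∫ y, f s y * k y ∂μ := by
  simp_rw [← intervalIntegral.integral_mul_const]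
  refine (intervalIntegral_integral_swap ?_).symm
  refine ((((integrableOn_const measure_Ioc_lt_top.ne :
    IntegrableOn (fun _ => (1 : ℝ)) (uIoc a b))).mul_prod hk.norm).const_mul M).mono'
    (hf.aestronglyMeasurable.mul hk.aestronglyMeasurable.comp_snd) ?_
  filter_upwards [Measure.quasiMeasurePreserving_fst.ae (ae_restrict_mem measurableSet_uIoc)]
    with z hz
  show ‖f z.1 z.2 * k z.2‖ ≤ M * (1 * ‖k z.2‖)
  rw [norm_mul, one_mul]
  exact mul_le_mul_of_nonneg_right (hM z.1 hz z.2) (norm_nonneg _)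

end Fubini

section Ball

variable {E : Type*} [NormedAddCommGroup E] [MeasurableSpace E] [OpensMeasurableSpace E]
  {μ : Measure E} {N : ℕ} {k : E → ℝ} {s : ℝ}

lemma measurable_inv_mul_scaleWeight_norm :
    Measurable (Function.uncurry fun s (y : E) => s⁻¹ * scaleWeight N ‖y‖ s) :=
  measurable_fst.inv.mul (measurable_scaleWeight.comp
    ((measurable_norm.comp measurable_snd).prodMk measurable_fst))

lemma integrable_mul_hProfile (hk : Integrable k μ) :
    Integrable (fun y => k y * hProfile N ‖y‖ s) μ :=
  hk.mul_bdd
    (measurable_hProfile.comp (measurable_norm.prodMk measurable_const)).aestronglyMeasurable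
    (Filter.Eventually.of_forall fun _ => abs_hProfile_le)

lemma setIntegral_ball_mul_hProfile {R : ℝ} (hs : 0 < s) (hsR : 2 * s ≤ R) :
    ∫ y in Metric.ball 0 R, k y * hProfile N ‖y‖ s ∂μ
      = ∫ y in Metric.ball 0 (2 * s), k y * hProfile N ‖y‖ s ∂μ := by
  refine setIntegral_eq_of_subset_of_forall_sdiff_eq_zero Metric.isOpen_ball.measurableSet
    (Metric.ball_subset_ball hsR) fun y hy => ?_
  have hy : 2 * s ≤ ‖y‖ := by simpa using hy.2
  rw [hProfile_of_two_mul_le hs hy, mul_zero]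

end Ball

theorem stmt_15_general (N : ℕ) (hN : 3 ≤ N) (a b : ℝ) (ha : 0 < a) (hab : 2 * a ≤ b)
    (k : EuclideanSpace ℝ (Fin N) → ℝ)
    (hk : IntegrableOn k (Metric.ball (0 : EuclideanSpace ℝ (Fin N)) (2 * b)))
    (J : ℝ → ℝ)
    (hJ : ∀ s : ℝ, J s = s ^ ((2 : ℝ) - N) *
      ∫ y in Metric.ball (0 : EuclideanSpace ℝ (Fin N)) (2 * s), k y * hProfile N ‖y‖ s) :
    (∫ y in Metric.ball (0 : EuclideanSpace ℝ (Fin N)) (2 * b),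
        lProfile N a b ‖y‖ * ‖y‖ ^ ((2 : ℝ) - N) * k y)
      = (∫ s in a..b, s⁻¹ * J s) + ((N : ℝ) - 2)⁻¹ * (J b - J a) := by
  have hf := measurable_inv_mul_scaleWeight_norm (E := EuclideanSpace ℝ (Fin N)) (N := N)
  have hM (s : ℝ) (hs : s ∈ uIoc a b) (y : EuclideanSpace ℝ (Fin N)) :
      ‖s⁻¹ * scaleWeight N ‖y‖ s‖ ≤ a⁻¹ * (a ^ ((2 : ℝ) - N) *
        |((N : ℝ) - 1) * ((N : ℝ) - 2) / ((2 : ℝ) ^ (N - 1) - 1)|) :=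
    abs_inv_mul_scaleWeight_le (by omega) ha
      (by rw [uIoc_of_le (by linarith)] at hs; exact hs.1.le)
  have hkh (s : ℝ) := integrable_mul_hProfile (N := N) (s := s) hk
  calc _ = ∫ y in Metric.ball 0 (2 * b), (∫ s in a..b, s⁻¹ * scaleWeight N ‖y‖ s) * k y +
        ((N : ℝ) - 2)⁻¹ * (b ^ ((2 : ℝ) - N) * (k y * hProfile N ‖y‖ b)
          - a ^ ((2 : ℝ) - N) * (k y * hProfile N ‖y‖ a)) := by
        congr 1; ext y
        rw [lProfile_mul_rpow_eq_scaleAverage hN ha hab, scaleAverage, scaleWeight, scaleWeight]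
        ring
    _ = (∫ s in a..b, ∫ y in Metric.ball 0 (2 * b), s⁻¹ * scaleWeight N ‖y‖ s * k y) +
        ((N : ℝ) - 2)⁻¹ *
          (b ^ ((2 : ℝ) - N) * (∫ y in Metric.ball 0 (2 * b), k y * hProfile N ‖y‖ b) -
            a ^ ((2 : ℝ) - N) * ∫ y in Metric.ball 0 (2 * b), k y * hProfile N ‖y‖ a) := by
        rw [integral_add (integrable_intervalIntegral_mul hk hf hM) ?_, integral_const_mul,
          integral_sub ((hkh b).const_mul _) ((hkh a).const_mul _), integral_const_mul,
          integral_const_mul, integral_intervalIntegral_mul hk hf hM]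
        exact (((hkh b).const_mul _).sub ((hkh a).const_mul _)).const_mul _
    _ = _ := by
        rw [hJ b, hJ a, setIntegral_ball_mul_hProfile ha (by linarith : 2 * a ≤ 2 * b)]
        congr 1
        refine intervalIntegral.integral_congr fun s hs => ?_
        rw [uIcc_of_le (by linarith)] at hs
        have hs0 : 0 < s := ha.trans_le hs.1
        rw [hJ s, ← setIntegral_ball_mul_hProfile hs0 (by linarith [hs.2] : 2 * s ≤ 2 * b),
          ← integral_const_mul, ← integral_const_mul]
        congr 1; ext y
        rw [scaleWeight]
        ring

/-- Integral representation of the truncated Riesz-type weight: for `N ≥ 3`, `0 < a`,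
`2a ≤ b`, and `k ∈ L¹(B_{2b}(0))`,
`∫_{B_{2b}} l(|y|)|y|^{2−N}k(y) dy = ∫_a^b s⁻¹·J_s ds + (N−2)⁻¹(J_b − J_a)`,
where `J_s := s^{2−N}∫_{B_{2s}} k(y)·h(|y|,s) dy`. -/
theorem stmt_15 (N : ℕ) (hN : 3 ≤ N) (a b : ℝ) (ha : 0 < a) (hb : 0 < b) (hab : 2 * a ≤ b)
    (k : EuclideanSpace ℝ (Fin N) → ℝ)
    (hk : IntegrableOn k (Metric.ball (0 : EuclideanSpace ℝ (Fin N)) (2 * b)))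
    (J : ℝ → ℝ)
    (hJ : ∀ s : ℝ, J s = s ^ ((2 : ℝ) - N) *
      ∫ y in Metric.ball (0 : EuclideanSpace ℝ (Fin N)) (2 * s), k y * hProfile N ‖y‖ s) :
    (∫ y in Metric.ball (0 : EuclideanSpace ℝ (Fin N)) (2 * b),
        lProfile N a b ‖y‖ * ‖y‖ ^ ((2 : ℝ) - N) * k y)
      = (∫ s in a..b, s⁻¹ * J s) + ((N : ℝ) - 2)⁻¹ * (J b - J a) :=
  stmt_15_general N hN a b ha hab k hk J hJ
end
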